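/- arXiv:2206.12963 — 4 statements merged into one kernel-verified Lean document; each statement's English description precedes it below -/
import Mathlib

section
/- Let P = VVᵀ be the orthogonal projection onto a subspace D ⊆ ℝ^d with V having orthonormal columns, let θ be invertible, and let P̂ be the orthogonal projection onto θD = {θx : x ∈ D}. Then ‖θ⁻¹P̂θ − P‖₂ ≤ (1 + κ(θ)²)·‖I − θᵀθ‖₂, where κ(θ) is the condition number of θ in the spectral norm. -/
open Matrix

/-- The spectral (ℓ² operator) norm of a real matrix. -/
noncomputable def spec {m n : ℕ} (A : Matrix (Fin m) (Fin n) ℝ) : ℝ :=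
  ‖LinearMap.toContinuousLinearMap (Matrix.toEuclideanLin A)‖

/-!
With `M = (θV)ᵀ(θV) = Vᵀ(θᵀθ)V`, one has `θ⁻¹P̂θ − P = V M⁻¹ Vᵀ (θᵀθ − c·I)(I − P)` for every
scalar `c`, because `Vᵀ(I − P) = 0`. Hence `‖θ⁻¹P̂θ − P‖₂ ≤ ‖M⁻¹‖₂ ‖θᵀθ − c·I‖₂`, and
`‖M⁻¹‖₂ ≤ ‖θ⁻¹‖₂²`. The spectrum of `θᵀθ` lies in `[‖θ⁻¹‖₂⁻², ‖θ‖₂²]`; taking `c` its midpoint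
gives `‖θ⁻¹P̂θ − P‖₂ ≤ (κ² − 1)/2`. Finally `‖I − θᵀθ‖₂` dominates both `‖θ‖₂² − 1` and
`1 − ‖θ⁻¹‖₂⁻²`, which is enough to bound `(κ² − 1)/2` by `(1 + κ²)‖I − θᵀθ‖₂`.
-/

open scoped Matrix.Norms.L2Operator RealInnerProductSpace

namespace Matrix

variable {m n r : Type*} [Fintype m] [Fintype n] [Fintype r] [DecidableEq n] [DecidableEq r]

theorem l2_opNorm_transpose [DecidableEq m] (A : Matrix m n ℝ) : ‖Aᵀ‖ = ‖A‖ := by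
  simpa using l2_opNorm_conjTranspose A

theorem l2_opNorm_transpose_mul_self (A : Matrix m n ℝ) : ‖Aᵀ * A‖ = ‖A‖ * ‖A‖ := by
  simpa using l2_opNorm_conjTranspose_mul_self A

theorem l2_opNorm_one_le : ‖(1 : Matrix n n ℝ)‖ ≤ 1 := by
  rw [cstar_norm_def, map_one]
  exact ContinuousLinearMap.norm_id_le

theorem l2_opNorm_le_one_of_transpose_mul_self_eq_one {V : Matrix m n ℝ} (hV : Vᵀ * V = 1) :
    ‖V‖ ≤ 1 := by
  have h := l2_opNorm_transpose_mul_self V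
  rw [hV] at h
  nlinarith [norm_nonneg V, l2_opNorm_one_le (n := n)]

theorem l2_opNorm_le_one_of_transpose_mul_self_eq_self {Q : Matrix n n ℝ} (hQ : Qᵀ * Q = Q) :
    ‖Q‖ ≤ 1 := by
  have h := l2_opNorm_transpose_mul_self Q
  rw [hQ] at h
  nlinarith [norm_nonneg Q]

theorem norm_toEuclideanLin_le (A : Matrix m n ℝ) (x : EuclideanSpace ℝ n) :
    ‖toEuclideanLin A x‖ ≤ ‖A‖ * ‖x‖ :=
  (toEuclideanLin.trans LinearMap.toContinuousLinearMap A).le_opNorm x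

theorem sq_norm_toEuclideanLin_le (A : Matrix m n ℝ) (x : EuclideanSpace ℝ n) :
    ‖toEuclideanLin A x‖ ^ 2 ≤ ‖A‖ ^ 2 * ‖x‖ ^ 2 := by
  rw [← mul_pow]
  exact pow_le_pow_left₀ (norm_nonneg _) (norm_toEuclideanLin_le A x) 2

theorem inv_sq_l2_opNorm_inv_mul_sq_norm_le {A : Matrix n n ℝ} (hA : IsUnit A.det)
    (x : EuclideanSpace ℝ n) : (‖A⁻¹‖ ^ 2)⁻¹ * ‖x‖ ^ 2 ≤ ‖toEuclideanLin A x‖ ^ 2 := by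
  have hx : ‖x‖ ≤ ‖A⁻¹‖ * ‖toEuclideanLin A x‖ := by
    have hinv : toEuclideanLin A⁻¹ (toEuclideanLin A x) = x := by
      ext i; simp [mulVec_mulVec, nonsing_inv_mul A hA]
    conv_lhs => rw [← hinv]
    exact norm_toEuclideanLin_le _ _
  rcases eq_or_ne ‖A⁻¹‖ 0 with h | h
  · simp [h]
  rw [inv_mul_le_iff₀ (by positivity), ← mul_pow]
  exact pow_le_pow_left₀ (norm_nonneg x) hx 2

theorem l2_opNorm_le_of_abs_inner_le {A : Matrix n n ℝ} (hA : A.IsSymm) {ρ : ℝ} (hρ : 0 ≤ ρ)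
    (h : ∀ x : EuclideanSpace ℝ n, |⟪toEuclideanCLM (𝕜 := ℝ) A x, x⟫| ≤ ρ * ‖x‖ ^ 2) :
    ‖A‖ ≤ ρ := by
  have hT : (toEuclideanCLM (𝕜 := ℝ) A).IsSymmetric :=
    isSymmetric_toEuclideanLin_iff.mpr (isHermitian_iff_isSymm.mpr hA)
  rw [cstar_norm_def, ContinuousLinearMap.norm_eq_iSup_rayleighQuotient _ hT]
  refine ciSup_le fun x => ?_
  rcases eq_or_ne x 0 with rfl | hx
  · simpa using hρ
  rw [ContinuousLinearMap.rayleighQuotient, ContinuousLinearMap.reApplyInnerSelf_apply, abs_div,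
    abs_of_nonneg (by positivity : (0 : ℝ) ≤ ‖x‖ ^ 2), div_le_iff₀ (by positivity)]
  simpa using h x

theorem l2_opNorm_transpose_mul_self_sub_smul_one_le [DecidableEq m] {A : Matrix m n ℝ} {a b : ℝ}
    (hab : a ≤ b)
    (ha : ∀ x : EuclideanSpace ℝ n, a * ‖x‖ ^ 2 ≤ ‖toEuclideanLin A x‖ ^ 2)
    (hb : ∀ x : EuclideanSpace ℝ n, ‖toEuclideanLin A x‖ ^ 2 ≤ b * ‖x‖ ^ 2) :
    ‖Aᵀ * A - ((a + b) / 2) • 1‖ ≤ (b - a) / 2 := by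
  refine l2_opNorm_le_of_abs_inner_le ?_ (by linarith) fun x => ?_
  · simp [IsSymm, transpose_sub, transpose_mul]
  have hx : ⟪toEuclideanCLM (𝕜 := ℝ) (Aᵀ * A - ((a + b) / 2) • 1) x, x⟫
      = ‖toEuclideanLin A x‖ ^ 2 - (a + b) / 2 * ‖x‖ ^ 2 := by
    have e : toEuclideanCLM (𝕜 := ℝ) (Aᵀ * A) x = toEuclideanLin Aᵀ (toEuclideanLin A x) := by
      ext i; simp [mulVec_mulVec]
    rw [map_sub, map_smul, map_one, _root_.sub_apply, _root_.smul_apply, one_apply_eq_self,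
      inner_sub_left, real_inner_smul_left, e, ← conjTranspose_eq_transpose_of_trivial,
      toEuclideanLin_conjTranspose_eq_adjoint, LinearMap.adjoint_inner_left,
      real_inner_self_eq_norm_sq, real_inner_self_eq_norm_sq]
  rw [hx, abs_le]
  constructor <;> nlinarith [ha x, hb x]

theorem one_le_l2_opNorm_mul_l2_opNorm_inv [Nonempty n] {A : Matrix n n ℝ} (hA : IsUnit A.det) :
    1 ≤ ‖A‖ * ‖A⁻¹‖ := by
  simpa [mul_nonsing_inv A hA] using l2_opNorm_mul A A⁻¹

theorem sq_l2_opNorm_le_one_add (A : Matrix m n ℝ) : ‖A‖ ^ 2 ≤ 1 + ‖1 - Aᵀ * A‖ :=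
  calc ‖A‖ ^ 2 = ‖Aᵀ * A‖ := by rw [sq, l2_opNorm_transpose_mul_self]
    _ ≤ ‖(1 : Matrix n n ℝ)‖ + ‖1 - Aᵀ * A‖ := by
        rw [norm_sub_rev]; exact norm_le_norm_add_norm_sub' _ _
    _ ≤ 1 + ‖1 - Aᵀ * A‖ := by grw [l2_opNorm_one_le]

theorem sq_l2_opNorm_inv_le_one_add {A : Matrix n n ℝ} (hA : IsUnit A.det) :
    ‖A⁻¹‖ ^ 2 ≤ 1 + ‖A⁻¹‖ ^ 2 * ‖1 - Aᵀ * A‖ := by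
  have hX : A⁻¹ * A⁻¹ᵀ * (Aᵀ * A) = 1 := by
    rw [Matrix.mul_assoc, ← Matrix.mul_assoc A⁻¹ᵀ, ← transpose_mul, mul_nonsing_inv A hA,
      transpose_one, Matrix.one_mul, nonsing_inv_mul A hA]
  have hXn : ‖A⁻¹ * A⁻¹ᵀ‖ = ‖A⁻¹‖ ^ 2 := by
    rw [← l2_opNorm_transpose A⁻¹, sq, ← l2_opNorm_transpose_mul_self, transpose_transpose]
  calc ‖A⁻¹‖ ^ 2 = ‖1 + A⁻¹ * A⁻¹ᵀ * (1 - Aᵀ * A)‖ := by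
        rw [Matrix.mul_sub, hX, Matrix.mul_one, add_sub_cancel, hXn]
    _ ≤ 1 + ‖A⁻¹‖ ^ 2 * ‖1 - Aᵀ * A‖ := by
        grw [norm_add_le, l2_opNorm_one_le, l2_opNorm_mul, hXn]

theorem isUnit_det_transpose_mul_self_of_mul_eq_one {B : Matrix m n ℝ} {L : Matrix n m ℝ}
    (hLB : L * B = 1) : IsUnit (Bᵀ * B).det := by
  rw [← isUnit_iff_isUnit_det, ← mulVec_injective_iff_isUnit, ← coe_mulVecLin,
    injective_iff_map_eq_zero]
  intro x hx
  rw [mulVecLin_apply, ← conjTranspose_eq_transpose_of_trivial,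
    conjTranspose_mul_self_mulVec_eq_zero] at hx
  rw [← one_mulVec x, ← hLB, ← mulVec_mulVec, hx, mulVec_zero]

/-- `(BᵀB)⁻¹ = K Kᵀ` for `K = (BᵀB)⁻¹Bᵀ = L (B K)`, and `B K` is an orthogonal projection. -/
theorem l2_opNorm_inv_transpose_mul_self_le [DecidableEq m] {B : Matrix m n ℝ} {L : Matrix n m ℝ}
    (hLB : L * B = 1) : ‖(Bᵀ * B)⁻¹‖ ≤ ‖L‖ ^ 2 := by
  have hM : (Bᵀ * B)⁻¹ * (Bᵀ * B) = 1 :=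
    nonsing_inv_mul _ (isUnit_det_transpose_mul_self_of_mul_eq_one hLB)
  have hMt : (Bᵀ * B)⁻¹ᵀ = (Bᵀ * B)⁻¹ := by
    rw [transpose_nonsing_inv, transpose_mul, transpose_transpose]
  set M := Bᵀ * B
  have hKK : (M⁻¹ * Bᵀ) * (M⁻¹ * Bᵀ)ᵀ = M⁻¹ := by
    rw [transpose_mul, transpose_transpose, hMt, Matrix.mul_assoc, ← Matrix.mul_assoc Bᵀ,
      ← Matrix.mul_assoc, hM, Matrix.one_mul]
  have hQ : (B * (M⁻¹ * Bᵀ))ᵀ * (B * (M⁻¹ * Bᵀ)) = B * (M⁻¹ * Bᵀ) := by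
    rw [transpose_mul, transpose_mul, transpose_transpose, hMt]
    simp only [Matrix.mul_assoc]
    rw [← Matrix.mul_assoc Bᵀ B, ← Matrix.mul_assoc M⁻¹ M, hM, Matrix.one_mul]
  have hK : ‖M⁻¹ * Bᵀ‖ ≤ ‖L‖ :=
    calc ‖M⁻¹ * Bᵀ‖ = ‖L * (B * (M⁻¹ * Bᵀ))‖ := by rw [← Matrix.mul_assoc, hLB, Matrix.one_mul]
      _ ≤ ‖L‖ * ‖B * (M⁻¹ * Bᵀ)‖ := l2_opNorm_mul _ _
      _ ≤ ‖L‖ := mul_le_of_le_one_right (norm_nonneg _)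
        (l2_opNorm_le_one_of_transpose_mul_self_eq_self hQ)
  calc ‖M⁻¹‖ = ‖M⁻¹ * Bᵀ‖ * ‖M⁻¹ * Bᵀ‖ := by
        rw [← l2_opNorm_transpose (M⁻¹ * Bᵀ), ← l2_opNorm_transpose_mul_self, transpose_transpose,
          hKK]
    _ ≤ ‖L‖ ^ 2 := by rw [sq]; exact mul_self_le_mul_self (norm_nonneg _) hK

theorem transpose_mul_sub_smul_one_mul_one_sub {V : Matrix n r ℝ} (hV : Vᵀ * V = 1)
    (G : Matrix n n ℝ) (c : ℝ) :
    Vᵀ * (G - c • 1) * (1 - V * Vᵀ) = Vᵀ * G - Vᵀ * G * V * Vᵀ := by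
  have hVQ : Vᵀ * (1 - V * Vᵀ) = 0 := by
    rw [Matrix.mul_sub, Matrix.mul_one, ← Matrix.mul_assoc, hV, Matrix.one_mul, sub_self]
  rw [Matrix.mul_assoc, Matrix.sub_mul, Matrix.smul_mul, Matrix.one_mul, Matrix.mul_sub,
    Matrix.mul_smul, hVQ, smul_zero, sub_zero]
  simp only [Matrix.mul_sub, Matrix.mul_one, Matrix.mul_assoc]

theorem nonsing_inv_mul_proj_mul_sub_eq {V : Matrix n r ℝ} (hV : Vᵀ * V = 1)
    {θ : Matrix n n ℝ} (hθ : IsUnit θ.det) (c : ℝ) :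
    θ⁻¹ * (θ * V * ((θ * V)ᵀ * (θ * V))⁻¹ * (θ * V)ᵀ) * θ - V * Vᵀ =
      V * ((θ * V)ᵀ * (θ * V))⁻¹ * Vᵀ * (θᵀ * θ - c • 1) * (1 - V * Vᵀ) := by
  have hθl : θ⁻¹ * θ = 1 := nonsing_inv_mul θ hθ
  have hLB : (Vᵀ * θ⁻¹) * (θ * V) = 1 := by
    rw [Matrix.mul_assoc, ← Matrix.mul_assoc θ⁻¹, hθl, Matrix.one_mul, hV]
  have hM : ((θ * V)ᵀ * (θ * V))⁻¹ * ((θ * V)ᵀ * (θ * V)) = 1 :=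
    nonsing_inv_mul _ (isUnit_det_transpose_mul_self_of_mul_eq_one hLB)
  have hMV : (θ * V)ᵀ * (θ * V) = Vᵀ * (θᵀ * θ) * V := by
    rw [transpose_mul]
    simp only [Matrix.mul_assoc]
  set M := (θ * V)ᵀ * (θ * V)
  rw [Matrix.mul_assoc (V * M⁻¹) Vᵀ, Matrix.mul_assoc (V * M⁻¹),
    transpose_mul_sub_smul_one_mul_one_sub hV, ← hMV, Matrix.mul_sub,
    ← Matrix.mul_assoc (V * M⁻¹) M, Matrix.mul_assoc V M⁻¹ M, hM, Matrix.mul_one, transpose_mul]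
  simp only [Matrix.mul_assoc]
  rw [← Matrix.mul_assoc θ⁻¹ θ, hθl, Matrix.one_mul]

theorem l2_opNorm_mul_mul_transpose_mul_mul_one_sub_le [DecidableEq m] {V : Matrix m r ℝ}
    (hV : Vᵀ * V = 1) (X : Matrix r r ℝ) (Y : Matrix m m ℝ) :
    ‖V * X * Vᵀ * Y * (1 - V * Vᵀ)‖ ≤ ‖X‖ * ‖Y‖ := by
  have hVn : ‖V‖ ≤ 1 := l2_opNorm_le_one_of_transpose_mul_self_eq_one hV
  have hP : V * Vᵀ * (V * Vᵀ) = V * Vᵀ := by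
    rw [Matrix.mul_assoc, ← Matrix.mul_assoc Vᵀ, hV, Matrix.one_mul]
  have hQ : (1 - V * Vᵀ)ᵀ * (1 - V * Vᵀ) = 1 - V * Vᵀ := by
    rw [transpose_sub, transpose_one, transpose_mul, transpose_transpose]
    simp only [Matrix.mul_sub, Matrix.sub_mul, Matrix.mul_one, Matrix.one_mul, hP]
    abel
  calc ‖V * X * Vᵀ * Y * (1 - V * Vᵀ)‖ ≤ ‖V‖ * ‖X‖ * ‖Vᵀ‖ * ‖Y‖ * ‖1 - V * Vᵀ‖ := by
        grw [l2_opNorm_mul, l2_opNorm_mul, l2_opNorm_mul, l2_opNorm_mul]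
    _ ≤ 1 * ‖X‖ * 1 * ‖Y‖ * 1 := by
        gcongr
        · rwa [l2_opNorm_transpose]
        · exact l2_opNorm_le_one_of_transpose_mul_self_eq_self hQ
    _ = ‖X‖ * ‖Y‖ := by ring

end Matrix

/-- With `a = t⁻²` and `b = L²`, the hypotheses say `1 - a ≤ e` and `b - 1 ≤ e`; the conclusion
is `(b - a) / (2a) ≤ (1 + b/a) e`. -/
theorem sq_mul_half_sub_inv_sq_le {L t e : ℝ} (ht : 0 < t) (he : 0 ≤ e) (hL : L ^ 2 ≤ 1 + e)
    (ht' : t ^ 2 ≤ 1 + t ^ 2 * e) :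
    t ^ 2 * ((L ^ 2 - (t ^ 2)⁻¹) / 2) ≤ (1 + (L * t) ^ 2) * e := by
  have h : t ^ 2 * ((L ^ 2 - (t ^ 2)⁻¹) / 2) = ((L * t) ^ 2 - 1) / 2 := by field_simp
  rw [h]
  nlinarith [mul_le_mul_of_nonneg_right hL (sq_nonneg t), sq_nonneg (L * t),
    mul_nonneg he (sq_nonneg (L * t))]

/-- With `P = VVᵀ` the orthogonal projection onto a subspace `D`,
`θ` invertible, and `P̂ = θV[(θV)ᵀ(θV)]⁻¹(θV)ᵀ` the orthogonal projection onto `θD`,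
one has `‖θ⁻¹ P̂ θ − P‖₂ ≤ (1 + κ(θ)²)·‖I − θᵀθ‖₂` where `κ(θ) = ‖θ‖₂‖θ⁻¹‖₂`. -/
theorem stmt_6 (d r : ℕ)
    (V : Matrix (Fin d) (Fin r) ℝ) (hV : Vᵀ * V = 1)
    (θ : Matrix (Fin d) (Fin d) ℝ) (hθ : IsUnit θ.det)
    (P Phat : Matrix (Fin d) (Fin d) ℝ)
    (hP : P = V * Vᵀ)
    (hPhat : Phat = (θ * V) * ((θ * V)ᵀ * (θ * V))⁻¹ * (θ * V)ᵀ) :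
    spec (θ⁻¹ * Phat * θ - P)
      ≤ (1 + (spec θ * spec θ⁻¹) ^ 2) * spec (1 - θᵀ * θ) := by
  change ‖θ⁻¹ * Phat * θ - P‖ ≤ (1 + (‖θ‖ * ‖θ⁻¹‖) ^ 2) * ‖1 - θᵀ * θ‖
  rcases isEmpty_or_nonempty (Fin d) with hd | hd
  · rw [Subsingleton.elim (θ⁻¹ * Phat * θ - P) 0, norm_zero]
    positivity
  have hκ := one_le_l2_opNorm_mul_l2_opNorm_inv hθ
  have ht : 0 < ‖θ⁻¹‖ := pos_of_mul_pos_right (one_pos.trans_le hκ) (norm_nonneg θ)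
  have hab : (‖θ⁻¹‖ ^ 2)⁻¹ ≤ ‖θ‖ ^ 2 := by
    rw [inv_le_iff_one_le_mul₀ (by positivity), ← mul_pow]
    exact one_le_pow₀ hκ
  have hLB : (Vᵀ * θ⁻¹) * (θ * V) = 1 := by
    rw [Matrix.mul_assoc, ← Matrix.mul_assoc θ⁻¹, nonsing_inv_mul θ hθ, Matrix.one_mul, hV]
  have hL : ‖Vᵀ * θ⁻¹‖ ≤ ‖θ⁻¹‖ := by
    grw [l2_opNorm_mul, l2_opNorm_transpose, l2_opNorm_le_one_of_transpose_mul_self_eq_one hV,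
      one_mul]
  set c := ((‖θ⁻¹‖ ^ 2)⁻¹ + ‖θ‖ ^ 2) / 2
  calc ‖θ⁻¹ * Phat * θ - P‖
      = ‖V * ((θ * V)ᵀ * (θ * V))⁻¹ * Vᵀ * (θᵀ * θ - c • 1) * (1 - V * Vᵀ)‖ := by
        rw [hP, hPhat, nonsing_inv_mul_proj_mul_sub_eq hV hθ c]
    _ ≤ ‖((θ * V)ᵀ * (θ * V))⁻¹‖ * ‖θᵀ * θ - c • 1‖ :=
        l2_opNorm_mul_mul_transpose_mul_mul_one_sub_le hV _ _
    _ ≤ ‖θ⁻¹‖ ^ 2 * ((‖θ‖ ^ 2 - (‖θ⁻¹‖ ^ 2)⁻¹) / 2) := by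
        gcongr
        · exact (l2_opNorm_inv_transpose_mul_self_le hLB).trans (by gcongr)
        · exact l2_opNorm_transpose_mul_self_sub_smul_one_le hab
            (inv_sq_l2_opNorm_inv_mul_sq_norm_le hθ) (sq_norm_toEuclideanLin_le θ)
    _ ≤ (1 + (‖θ‖ * ‖θ⁻¹‖) ^ 2) * ‖1 - θᵀ * θ‖ :=
        sq_mul_half_sub_inv_sq_le ht (norm_nonneg _) (sq_l2_opNorm_le_one_add θ)
          (sq_l2_opNorm_inv_le_one_add hθ)
end

section
/- For the linearized closed-loop controlled system with perturbed initial condition, the error satisfies the bound ‖q̄_{ε,t} − x_t‖₂² ≤ ‖θ_{t−1}⋯θ_0‖₂² · ( α^{2t}‖z⊥‖₂² + ‖z∥‖₂² + γ_t‖z‖₂²(γ_t α²(1−α^{t−1})² + 2(α − α^t)) ), where γ_t = max_{s≤t} (1 + κ(θ_{s−1}⋯θ_0)²)‖I − (θ_{s−1}⋯θ_0)ᵀ(θ_{s−1}⋯θ_0)‖₂ and α = c/(1+c). -/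
/-!
Pull the error back along the open-loop flow, `u_s = Θ_s⁻¹ (q̄_{ε,s} - x_s)`. Since
`I - K_s = α I + (1 - α) P_s`, it obeys `u_{s+1} = α u_s + (1 - α) R_s u_s`, where
`R_s = Θ_s⁻¹ P_s Θ_s` is an oblique projection onto `Z`. Hence
`u_t = (z∥ + ∑_{i<t} (1 - α) αⁱ R_i z⊥) + αᵗ z⊥` with the bracket in `Z`, orthogonal to `z⊥`.
The corrections are small when `Θ_i` is nearly orthogonal: for `q = R_i z⊥` the vectors
`Θ_i (z⊥ - q)` and `Θ_i q` are orthogonal, so `‖q‖² = ⟪q - z⊥, (I - Θ_iᵀ Θ_i) q⟫`, while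
`‖z⊥ - q‖ ≤ κ(Θ_i) ‖z⊥‖`; and `R_0 z⊥ = 0` because `Θ_0 = I`. Summing the geometric
weights and using Pythagoras gives the bound.
-/

open Matrix

open Finset RealInnerProductSpace

theorem relaxedProjection_iterate_eq {K M : Type*} [CommRing K] [AddCommGroup M] [Module K M]
    {Z : Submodule K M} {R : ℕ → M →ₗ[K] M} (hR_mem : ∀ s y, R s y ∈ Z)
    (hR_fix : ∀ s, ∀ v ∈ Z, R s v = v) {α : K} {a b : M} (ha : a ∈ Z) {u : ℕ → M}
    (h0 : u 0 = a + b) (hsucc : ∀ s, u (s + 1) = α • u s + (1 - α) • R s (u s)) (t : ℕ) :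
    u t = (a + ∑ i ∈ range t, ((1 - α) * α ^ i) • R i b) + α ^ t • b := by
  induction t with
  | zero => simp [h0]
  | succ t ih =>
    have hv : a + ∑ i ∈ range t, ((1 - α) * α ^ i) • R i b ∈ Z :=
      Z.add_mem ha (Z.sum_mem fun i _ => Z.smul_mem _ (hR_mem i b))
    rw [hsucc, ih, map_add, map_smul, hR_fix t _ hv, sum_range_succ]
    module

theorem sum_mul_geom_weights_le {α G : ℝ} (hα0 : 0 ≤ α) (hα1 : α ≤ 1) {t : ℕ} (ht : 1 ≤ t)
    {f : ℕ → ℝ} (hf0 : f 0 ≤ 0) (hf : ∀ i < t, f i ≤ G) :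
    ∑ i ∈ range t, (1 - α) * α ^ i * f i ≤ G * (α - α ^ t) := by
  obtain ⟨m, rfl⟩ : ∃ m, t = m + 1 := ⟨t - 1, by omega⟩
  have h1α : 0 ≤ 1 - α := by linarith
  rw [sum_range_succ']
  calc ∑ i ∈ range m, (1 - α) * α ^ (i + 1) * f (i + 1) + (1 - α) * α ^ 0 * f 0
      ≤ ∑ i ∈ range m, (1 - α) * α ^ (i + 1) * G + 0 := by
        gcongr with i hi
        · exact hf _ (by simp at hi; omega)
        · exact mul_nonpos_of_nonneg_of_nonpos (by positivity) hf0
    _ = G * (α - α ^ (m + 1)) := by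
        rw [add_zero, ← sum_mul, ← mul_sum]
        simp_rw [pow_succ, ← sum_mul]
        linear_combination (-(G * α)) * geom_sum_mul α m

theorem sq_add_mul_le {a b g D : ℝ} (hg : 0 ≤ g) (hD : 0 ≤ D) :
    (a + g * b * D) ^ 2 ≤ a ^ 2 + g * (a ^ 2 + b ^ 2) * (g * D ^ 2 + 2 * D) := by
  have hgD : 0 ≤ g * D := mul_nonneg hg hD
  nlinarith [mul_nonneg hgD (sq_nonneg (a - b)), mul_nonneg hgD (sq_nonneg a),
    mul_nonneg (mul_nonneg hgD hgD) (sq_nonneg a)]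

section

variable {E : Type*} [NormedAddCommGroup E] [InnerProductSpace ℝ E]

theorem norm_le_norm_one_sub_star_mul_self_mul [CompleteSpace E] {A : E →L[ℝ] E} {q w : E}
    (hwq : ⟪w, q⟫ = 0) (hA : ⟪A (w - q), A q⟫ = 0) :
    ‖q‖ ≤ ‖1 - star A * A‖ * ‖w - q‖ := by
  have key : ‖q‖ ^ 2 = ⟪q - w, (1 - star A * A) q⟫ := by
    have : (1 - star A * A) q = q - star A (A q) := rfl
    rw [this, inner_sub_right, ContinuousLinearMap.star_eq_adjoint,
      ContinuousLinearMap.adjoint_inner_right, inner_sub_left, real_inner_self_eq_norm_sq,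
      hwq, ← neg_sub w q, map_neg, inner_neg_left, hA]
    ring
  have hle : ‖q‖ ^ 2 ≤ ‖1 - star A * A‖ * ‖w - q‖ * ‖q‖ := by
    calc ‖q‖ ^ 2 ≤ ‖q - w‖ * ‖(1 - star A * A) q‖ := key ▸ real_inner_le_norm _ _
      _ ≤ ‖w - q‖ * (‖1 - star A * A‖ * ‖q‖) := by
        rw [norm_sub_rev]; gcongr; exact ContinuousLinearMap.le_opNorm _ _
      _ = _ := by ring
  rcases (norm_nonneg q).eq_or_lt with hq | hq
  · rw [← hq]; positivity
  · nlinarith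

variable [FiniteDimensional ℝ E]

noncomputable def pulledBackProjection (Z : Submodule ℝ E) (T Tinv : E →L[ℝ] E) :
    E →L[ℝ] E :=
  Tinv ∘L (Z.map (T : E →ₗ[ℝ] E)).starProjection ∘L T

variable {Z : Submodule ℝ E} {T Tinv : E →L[ℝ] E}

theorem pulledBackProjection_mem (hT : Function.LeftInverse Tinv T) (y : E) :
    pulledBackProjection Z T Tinv y ∈ Z := by
  obtain ⟨v, hv, hTv⟩ := Submodule.mem_map.mp
    ((Z.map (T : E →ₗ[ℝ] E)).starProjection_apply_mem (T y))
  simp only [pulledBackProjection, ContinuousLinearMap.comp_apply]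
  rw [← hTv]
  simpa [hT v] using hv

theorem map_pulledBackProjection (hT : Function.LeftInverse Tinv T) (y : E) :
    T (pulledBackProjection Z T Tinv y) = (Z.map (T : E →ₗ[ℝ] E)).starProjection (T y) := by
  obtain ⟨v, -, hTv⟩ := Submodule.mem_map.mp
    ((Z.map (T : E →ₗ[ℝ] E)).starProjection_apply_mem (T y))
  simp only [pulledBackProjection, ContinuousLinearMap.comp_apply]
  rw [← hTv]
  simp [hT v]

theorem pulledBackProjection_eq_self (hT : Function.LeftInverse Tinv T) {v : E} (hv : v ∈ Z) :
    pulledBackProjection Z T Tinv v = v := by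
  have hTv : T v ∈ Z.map (T : E →ₗ[ℝ] E) := Submodule.mem_map_of_mem hv
  simp only [pulledBackProjection, ContinuousLinearMap.comp_apply]
  rw [Submodule.starProjection_eq_self_iff.mpr hTv]
  exact hT v

theorem norm_pulledBackProjection_le (hT : Function.LeftInverse Tinv T) {w : E}
    (hw : w ∈ Zᗮ) :
    ‖pulledBackProjection Z T Tinv w‖ ≤ ‖T‖ * ‖Tinv‖ * ‖1 - star T * T‖ * ‖w‖ := by
  set P := (Z.map (T : E →ₗ[ℝ] E)).starProjection
  set q := pulledBackProjection Z T Tinv w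
  have hdist : ‖w - q‖ ≤ ‖Tinv‖ * (‖T‖ * ‖w‖) := by
    have hwq : w - q = Tinv (T w - P (T w)) := by
      rw [map_sub, hT w]; rfl
    rw [hwq]
    calc ‖Tinv (T w - P (T w))‖ ≤ ‖Tinv‖ * ‖T w - P (T w)‖ := Tinv.le_opNorm _
      _ ≤ ‖Tinv‖ * (‖T‖ * ‖w‖) := by
        gcongr
        rw [← Submodule.starProjection_orthogonal_val]
        exact (Submodule.norm_starProjection_apply_le _ _).trans (T.le_opNorm w)
  have horth : ⟪T (w - q), T q⟫ = 0 := by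
    rw [map_sub, map_pulledBackProjection hT]
    exact Submodule.starProjection_inner_eq_zero _ _ (Submodule.starProjection_apply_mem _ _)
  calc ‖q‖ ≤ ‖1 - star T * T‖ * ‖w - q‖ :=
        norm_le_norm_one_sub_star_mul_self_mul
          ((Submodule.mem_orthogonal' Z w).mp hw q (pulledBackProjection_mem hT w)) horth
    _ ≤ ‖1 - star T * T‖ * (‖Tinv‖ * (‖T‖ * ‖w‖)) := by gcongr
    _ = _ := by ring

theorem norm_sum_pulledBackProjection_le {T Tinv : ℕ → E →L[ℝ] E}
    (hT : ∀ s, Function.LeftInverse (Tinv s) (T s)) (hT0 : T 0 = 1) {α : ℝ} (hα0 : 0 ≤ α)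
    (hα1 : α ≤ 1) {w : E} (hw : w ∈ Zᗮ) {t : ℕ} (ht : 1 ≤ t) {G : ℝ}
    (hG : ∀ s ≤ t, ‖T s‖ * ‖Tinv s‖ * ‖1 - star (T s) * T s‖ ≤ G) :
    ‖∑ i ∈ range t, ((1 - α) * α ^ i) • pulledBackProjection Z (T i) (Tinv i) w‖
      ≤ G * ‖w‖ * (α - α ^ t) := by
  refine (norm_sum_le _ _).trans ?_
  simp_rw [norm_smul, Real.norm_of_nonneg (mul_nonneg (sub_nonneg.mpr hα1) (pow_nonneg hα0 _))]
  refine sum_mul_geom_weights_le hα0 hα1 ht ?_ fun i hi =>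
    (norm_pulledBackProjection_le (hT i) hw).trans (by gcongr; exact hG i hi.le)
  exact (norm_pulledBackProjection_le (hT 0) hw).trans_eq (by simp [hT0])

theorem norm_sq_relaxedProjection_iterate_le {T Tinv : ℕ → E →L[ℝ] E}
    (hT : ∀ s, Function.LeftInverse (Tinv s) (T s)) (hT0 : T 0 = 1) {α : ℝ} (hα0 : 0 ≤ α)
    (hα1 : α ≤ 1) {zpar zperp : E} (hzpar : zpar ∈ Z) (hzperp : zperp ∈ Zᗮ) {u : ℕ → E}
    (h0 : u 0 = zpar + zperp)
    (hsucc : ∀ s, u (s + 1) = α • u s + (1 - α) • pulledBackProjection Z (T s) (Tinv s) (u s))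
    {t : ℕ} (ht : 1 ≤ t) {G : ℝ}
    (hG : ∀ s ≤ t, ‖T s‖ * ‖Tinv s‖ * ‖1 - star (T s) * T s‖ ≤ G) :
    ‖u t‖ ^ 2 ≤ α ^ (2 * t) * ‖zperp‖ ^ 2 + ‖zpar‖ ^ 2
      + G * ‖zpar + zperp‖ ^ 2 * (G * α ^ 2 * (1 - α ^ (t - 1)) ^ 2 + 2 * (α - α ^ t)) := by
  set v := zpar + ∑ i ∈ range t, ((1 - α) * α ^ i) • pulledBackProjection Z (T i) (Tinv i) zperp
  have hu : u t = v + α ^ t • zperp :=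
    relaxedProjection_iterate_eq (R := fun s => pulledBackProjection Z (T s) (Tinv s))
      (fun s => pulledBackProjection_mem (hT s)) (fun s _ => pulledBackProjection_eq_self (hT s))
      hzpar h0 hsucc t
  have hv_mem : v ∈ Z :=
    Z.add_mem hzpar (Z.sum_mem fun i _ => Z.smul_mem _ (pulledBackProjection_mem (hT i) _))
  have hD : α - α ^ t = α * (1 - α ^ (t - 1)) := by
    obtain ⟨m, rfl⟩ : ∃ m, t = m + 1 := ⟨t - 1, by omega⟩
    simp only [add_tsub_cancel_right]; ring
  have hD0 : 0 ≤ α - α ^ t := hD ▸ mul_nonneg hα0 (sub_nonneg.mpr (pow_le_one₀ hα0 hα1))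
  have hG0 : 0 ≤ G := (by positivity : (0 : ℝ) ≤ _).trans (hG 0 t.zero_le)
  have hv : ‖v‖ ≤ ‖zpar‖ + G * ‖zperp‖ * (α - α ^ t) :=
    (norm_add_le _ _).trans (by
      gcongr; exact norm_sum_pulledBackProjection_le hT hT0 hα0 hα1 hzperp ht hG)
  have hpyth : ‖u t‖ ^ 2 = ‖v‖ ^ 2 + α ^ (2 * t) * ‖zperp‖ ^ 2 := by
    have horth : ⟪v, α ^ t • zperp⟫ = 0 := by
      rw [real_inner_smul_right, (Submodule.mem_orthogonal Z zperp).mp hzperp v hv_mem, mul_zero]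
    rw [hu, sq, norm_add_sq_eq_norm_sq_add_norm_sq_real horth, norm_smul,
      Real.norm_of_nonneg (by positivity), pow_mul]
    ring
  have hz : ‖zpar + zperp‖ ^ 2 = ‖zpar‖ ^ 2 + ‖zperp‖ ^ 2 := by
    rw [sq, norm_add_sq_eq_norm_sq_add_norm_sq_real
      ((Submodule.mem_orthogonal Z zperp).mp hzperp zpar hzpar)]
    ring
  have hsq := sq_add_mul_le (a := ‖zpar‖) (b := ‖zperp‖) hG0 hD0
  rw [hpyth, hz, show G * α ^ 2 * (1 - α ^ (t - 1)) ^ 2 = G * (α - α ^ t) ^ 2 by rw [hD]; ring]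
  nlinarith [pow_le_pow_left₀ (norm_nonneg v) hv 2]

end

local notation "toCLM" => Matrix.toEuclideanCLM (𝕜 := ℝ)

section

variable {n : Type*} [Fintype n] [DecidableEq n]

theorem one_sub_inv_smul_one_add_mul_eq {c : ℝ} (hc : 0 < c) {P : Matrix n n ℝ}
    (hPt : Pᵀ = P) (hP : IsIdempotentElem P) :
    1 - (c • 1 + (1 - P)ᵀ * (1 - P))⁻¹ * ((1 - P)ᵀ * (1 - P))
      = (c / (1 + c)) • 1 + (1 - c / (1 + c)) • P := by
  have hPP : P * P = P := hP
  have hQ : (1 - P)ᵀ * (1 - P) = 1 - P := by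
    rw [transpose_sub, transpose_one, hPt]; exact hP.one_sub
  -- `c • 1 + (1 - P)` acts as `c` on the range of `P` and as `c + 1` on its kernel
  have hinv : (c • 1 + (1 - P))⁻¹
      = (1 / (c + 1)) • (1 : Matrix n n ℝ) + (1 / (c * (c + 1))) • P := by
    refine inv_eq_right_inv ?_
    simp only [add_mul, mul_add, sub_mul, Matrix.smul_mul, Matrix.mul_smul, smul_smul, one_mul,
      mul_one, hPP]
    match_scalars
    · field_simp
    · field_simp; ring
  rw [hQ, hinv]
  simp only [add_mul, mul_sub, Matrix.smul_mul, one_mul, mul_one, hPP]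
  match_scalars <;> field_simp <;> ring

theorem isUnit_det_list_prod {R : Type*} [CommRing R] {l : List (Matrix n n R)}
    (h : ∀ A ∈ l, IsUnit A.det) : IsUnit l.prod.det :=
  (isUnit_iff_isUnit_det _).mp (List.prod_isUnit fun A hA => (isUnit_iff_isUnit_det A).mpr (h A hA))

theorem toEuclideanCLM_eq_starProjection {P : Matrix n n ℝ} (hPt : Pᵀ = P)
    {W : Submodule ℝ (EuclideanSpace ℝ n)} (hmem : ∀ y, toCLM P y ∈ W)
    (hfix : ∀ w ∈ W, toCLM P w = w) :
    toCLM P = W.starProjection := by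
  have hself : star (toCLM P) = toCLM P := by
    rw [← map_star, star_eq_conjTranspose, conjTranspose_eq_transpose_of_trivial, hPt]
  refine ContinuousLinearMap.ext fun y => (Submodule.eq_starProjection_of_mem_of_inner_eq_zero
    (hmem y) fun w hw => ?_).symm
  rw [inner_sub_left, ← hself, ContinuousLinearMap.star_eq_adjoint,
    ContinuousLinearMap.adjoint_inner_left, hfix w hw, sub_self]

theorem toEuclideanCLM_one_sub_transpose_mul_self (A : Matrix n n ℝ) :
    toCLM (1 - Aᵀ * A) = 1 - star (toCLM A) * toCLM A := by
  rw [← conjTranspose_eq_transpose_of_trivial, ← star_eq_conjTranspose, map_sub, map_one,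
    map_mul, map_star]

theorem leftInverse_toEuclideanCLM_inv {A : Matrix n n ℝ} (hA : IsUnit A.det) :
    Function.LeftInverse (toCLM A⁻¹) (toCLM A) := fun y => by
  rw [← mul_apply_eq_comp, ← map_mul, nonsing_inv_mul _ hA, map_one, one_apply_eq_self]

theorem rightInverse_toEuclideanCLM_inv {A : Matrix n n ℝ} (hA : IsUnit A.det) :
    Function.RightInverse (toCLM A⁻¹) (toCLM A) := fun y => by
  rw [← mul_apply_eq_comp, ← map_mul, mul_nonsing_inv _ hA, map_one, one_apply_eq_self]

theorem toEuclideanCLM_mul_inv_relaxedProjection {θ Θ P : Matrix n n ℝ} (hθ : IsUnit θ.det)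
    (hΘ : IsUnit Θ.det) {Z : Submodule ℝ (EuclideanSpace ℝ n)}
    (hP : toCLM P = (Z.map (toCLM Θ : _ →ₗ[ℝ] _)).starProjection) (a : ℝ)
    (u : EuclideanSpace ℝ n) :
    toCLM (θ * Θ)⁻¹ (toCLM (θ * (a • 1 + (1 - a) • P)) (toCLM Θ u))
      = a • u + (1 - a) • pulledBackProjection Z (toCLM Θ) (toCLM Θ⁻¹) u := by
  have hcancel : (θ * Θ)⁻¹ * (θ * (a • 1 + (1 - a) • P)) = Θ⁻¹ * (a • 1 + (1 - a) • P) := by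
    rw [Matrix.mul_inv_rev, Matrix.mul_assoc, ← Matrix.mul_assoc θ⁻¹, nonsing_inv_mul _ hθ,
      Matrix.one_mul]
  rw [← mul_apply_eq_comp, ← map_mul, hcancel, map_mul, mul_apply_eq_comp,
    map_add, map_smul, map_smul, map_one, hP]
  simp [pulledBackProjection, leftInverse_toEuclideanCLM_inv hΘ u]

theorem toEuclideanCLM_mul_inv_closedLoop {θ Θ P : Matrix n n ℝ} (hθ : IsUnit θ.det)
    (hΘ : IsUnit Θ.det) {c : ℝ} (hc : 0 < c) (hPt : Pᵀ = P) {Z : Submodule ℝ (EuclideanSpace ℝ n)}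
    (hP : toCLM P = (Z.map (toCLM Θ : _ →ₗ[ℝ] _)).starProjection) (u : EuclideanSpace ℝ n) :
    toCLM (θ * Θ)⁻¹ (toCLM (θ * (1 - (c • 1 + (1 - P)ᵀ * (1 - P))⁻¹ * ((1 - P)ᵀ * (1 - P))))
        (toCLM Θ u))
      = (c / (1 + c)) • u + (1 - c / (1 + c)) •
          pulledBackProjection Z (toCLM Θ) (toCLM Θ⁻¹) u := by
  have hPP : IsIdempotentElem P := (toCLM).injective <| show toCLM (P * P) = toCLM P by
    rw [map_mul, hP]
    exact (Submodule.isIdempotentElem_starProjection _).eq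
  rw [one_sub_inv_smul_one_add_mul_eq hc hPt hPP,
    toEuclideanCLM_mul_inv_relaxedProjection hθ hΘ hP]

theorem norm_toEuclideanCLM_mul_norm_inv_mul_le {d : ℕ} (A : Matrix (Fin d) (Fin d) ℝ) :
    ‖toCLM A‖ * ‖toCLM A⁻¹‖ * ‖1 - star (toCLM A) * toCLM A‖
      ≤ (1 + (spec A * spec A⁻¹) ^ 2) * spec (1 - Aᵀ * A) := by
  rw [← toEuclideanCLM_one_sub_transpose_mul_self]
  change spec A * spec A⁻¹ * spec (1 - Aᵀ * A) ≤ _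
  gcongr
  · exact norm_nonneg _
  · nlinarith [sq_nonneg (spec A * spec A⁻¹ - 1)]

end

/-- For the linearized closed-loop controlled system
`q̄_{ε,t+1} − x_{t+1} = θ_t(I−K_t)(q̄_{ε,t} − x_t)` with `q̄_{ε,0} − x_0 = z`,
the error satisfies
`‖q̄_{ε,t} − x_t‖² ≤ ‖θ_{t−1}⋯θ_0‖₂²(α^{2t}‖z⊥‖² + ‖z∥‖² + γ_t‖z‖²(γ_t α²(1−α^{t−1})² + 2(α−α^t)))`
where `γ_t = max_{s≤t} (1+κ(θ_{s−1}⋯θ_0)²)‖I−(θ_{s−1}⋯θ_0)ᵀ(θ_{s−1}⋯θ_0)‖₂`,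
`α = c/(1+c)`. -/
theorem stmt_9 (d t : ℕ) (ht : 1 ≤ t) (c : ℝ) (hc : 0 < c) (α : ℝ) (hα : α = c / (1 + c))
    (Z : Submodule ℝ (EuclideanSpace ℝ (Fin d)))
    (θ : ℕ → Matrix (Fin d) (Fin d) ℝ) (hθ : ∀ s, IsUnit (θ s).det)
    (Θ : ℕ → Matrix (Fin d) (Fin d) ℝ)
    (hΘ : ∀ s, Θ s = ((List.range s).map θ).reverse.prod)
    (W : ℕ → Submodule ℝ (EuclideanSpace ℝ (Fin d)))
    (hW : ∀ s, W s = Z.map (Matrix.toEuclideanLin (Θ s)))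
    (P : ℕ → Matrix (Fin d) (Fin d) ℝ)
    (hPsym : ∀ s, (P s)ᵀ = P s)
    (hPmem : ∀ s x, (WithLp.toLp 2 ((P s).mulVec x) : EuclideanSpace ℝ (Fin d)) ∈ W s)
    (hPfix : ∀ s, ∀ x ∈ W s, (P s).mulVec x = x)
    (K : ℕ → Matrix (Fin d) (Fin d) ℝ)
    (hK : ∀ s, K s = (c • (1 : Matrix (Fin d) (Fin d) ℝ) + (1 - P s)ᵀ * (1 - P s))⁻¹
        * ((1 - P s)ᵀ * (1 - P s)))
    (z zpar zperp : EuclideanSpace ℝ (Fin d))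
    (hz : z = zpar + zperp) (hzpar : zpar ∈ Z) (hzperp : zperp ∈ Zᗮ)
    (q x : ℕ → EuclideanSpace ℝ (Fin d))
    (h0 : q 0 - x 0 = z)
    (hdyn : ∀ s, q (s + 1) - x (s + 1) = (WithLp.toLp 2 ((θ s * (1 - K s)).mulVec (q s - x s)) :
        EuclideanSpace ℝ (Fin d)))
    (γ : ℝ)
    (hγ : γ = Finset.sup' (Finset.Iic t) Finset.nonempty_Iic
        (fun s => (1 + (spec (Θ s) * spec (Θ s)⁻¹) ^ 2) * spec (1 - (Θ s)ᵀ * Θ s))) :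
    ‖q t - x t‖ ^ 2
      ≤ spec (Θ t) ^ 2 * (α ^ (2 * t) * ‖zperp‖ ^ 2 + ‖zpar‖ ^ 2
          + γ * ‖z‖ ^ 2 * (γ * α ^ 2 * (1 - α ^ (t - 1)) ^ 2 + 2 * (α - α ^ t))) := by
  have hα0 : 0 ≤ α := hα ▸ by positivity
  have hα1 : α ≤ 1 := hα ▸ (div_le_one (by positivity)).mpr (by linarith)
  have hΘ0 : Θ 0 = 1 := by simp [hΘ]
  have hΘsucc : ∀ s, Θ (s + 1) = θ s * Θ s := by simp [hΘ, List.range_succ]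
  have hΘunit : ∀ s, IsUnit (Θ s).det := fun s =>
    hΘ s ▸ isUnit_det_list_prod (by simpa using fun i _ => hθ i)
  have hproj : ∀ s, toCLM (P s) = (Z.map (toCLM (Θ s) : _ →ₗ[ℝ] _)).starProjection := fun s => by
    have h := toEuclideanCLM_eq_starProjection (hPsym s) (hPmem s ·)
      fun w hw => congrArg (WithLp.toLp 2) (hPfix s w hw)
    rwa [hW s] at h
  set u := fun s => toCLM (Θ s)⁻¹ (q s - x s)
  have he : ∀ s, q s - x s = toCLM (Θ s) (u s) := fun s =>
    (rightInverse_toEuclideanCLM_inv (hΘunit s) _).symm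
  have hsucc : ∀ s, u (s + 1) = α • u s + (1 - α) •
      pulledBackProjection Z (toCLM (Θ s)) (toCLM (Θ s)⁻¹) (u s) := fun s => by
    change toCLM (Θ (s + 1))⁻¹ (q (s + 1) - x (s + 1)) = _
    rw [hdyn s, hΘsucc s, hα]
    change toCLM (θ s * Θ s)⁻¹ (toCLM (θ s * (1 - K s)) (q s - x s)) = _
    rw [hK s, he s, toEuclideanCLM_mul_inv_closedLoop (hθ s) (hΘunit s) hc (hPsym s) (hproj s)]
  have hbound := norm_sq_relaxedProjection_iterate_le
    (fun s => leftInverse_toEuclideanCLM_inv (hΘunit s)) (by rw [hΘ0, map_one]) hα0 hα1 hzpar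
    hzperp (by simp only [u, hΘ0, inv_one, map_one, h0, hz]; rfl) hsucc ht fun s hs =>
      (norm_toEuclideanCLM_mul_norm_inv_mul_le (Θ s)).trans
        (hγ ▸ Finset.le_sup' (fun s => _) (Finset.mem_Iic.mpr hs))
  rw [← hz] at hbound
  calc ‖q t - x t‖ ^ 2 ≤ (spec (Θ t) * ‖u t‖) ^ 2 := by
        rw [he]; gcongr; exact ContinuousLinearMap.le_opNorm _ _
    _ = spec (Θ t) ^ 2 * ‖u t‖ ^ 2 := mul_pow _ _ _
    _ ≤ _ := by gcongr
end

section
/- Let M* be the manifold {x ∈ ℝ^d : Ax = 0, |cᵀx| ≥ δ} contained in the linear subspace M = {x : Ax = 0}, and let E : ℝ^d → M be the orthogonal projection onto M. For any linear classifier F on ℝ^d, the manifold margin d_M(F) equals the Euclidean margin of the composed classifier F∘E: d_M(F) = d_e(F∘E). -/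
/-!
Both margins only see `F` on `M`, and since `E` is a contraction fixing `M`, a perturbation
flipping `F ∘ E` at `x ∈ M*` may be replaced by one in `M` of no larger norm. The midpoint of two
differently labelled points of `M*` is labelled differently from one of them, which gives
`d_e(F ∘ E) ≤ d_M(F)`. Conversely, let `x ∈ M*` and `v ∈ M` with `F x ≠ F (x + v)`. If `cᵀ` vanishes
somewhere on `M` where `n̂ᵀ` does not, say at `w`, then the whole line `x + ℝ w` lies in `M*` and
crosses the decision boundary, so both margins are `0`. Otherwise `cᵀ` and `n̂ᵀ` are proportional
on `M`; then `x + 2v` has the opposite label and `|cᵀ(x + 2v)| ≥ |cᵀx|`, so it lies in `M*` at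
distance `2‖v‖` from `x`.
-/

open RealInnerProductSpace

theorem mul_sInf_eq_sInf_of_approx {T₁ T₂ : Set ℝ} {c : ℝ} (hc : 0 < c)
    (h₁ : ∀ a ∈ T₁, 0 ≤ a) (h₂ : ∀ b ∈ T₂, 0 ≤ b)
    (h₁₂ : ∀ a ∈ T₁, ∃ b ∈ T₂, b ≤ c * a)
    (h₂₁ : ∀ b ∈ T₂, ∀ ε > 0, ∃ a ∈ T₁, c * a ≤ b + ε) :
    c * sInf T₁ = sInf T₂ := by
  rcases T₂.eq_empty_or_nonempty with rfl | ⟨b₀, hb₀⟩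
  · have : T₁ = ∅ := Set.eq_empty_of_forall_notMem fun a ha => by
      obtain ⟨b, hb, -⟩ := h₁₂ a ha
      exact hb
    simp [this]
  obtain ⟨a₀, ha₀, -⟩ := h₂₁ b₀ hb₀ 1 one_pos
  apply le_antisymm
  · refine le_csInf ⟨b₀, hb₀⟩ fun b hb => le_of_forall_pos_le_add fun ε hε => ?_
    obtain ⟨a, ha, hab⟩ := h₂₁ b hb ε hε
    exact (mul_le_mul_of_nonneg_left (csInf_le ⟨0, h₁⟩ ha) hc.le).trans hab
  · have : sInf T₂ / c ≤ sInf T₁ := le_csInf ⟨a₀, ha₀⟩ fun a ha => by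
      obtain ⟨b, hb, hba⟩ := h₁₂ a ha
      exact (div_le_iff₀' hc).2 ((csInf_le ⟨0, h₂⟩ hb).trans hba)
    rwa [div_le_iff₀' hc] at this

theorem Real.sign_add_two_mul_ne_and_abs_le {p q : ℝ} (h : Real.sign p ≠ Real.sign (p + q)) :
    Real.sign (p + 2 * q) ≠ Real.sign p ∧ |p| ≤ |p + 2 * q| := by
  rcases lt_trichotomy p 0 with hp | rfl | hp
  · have hpq : 0 ≤ p + q := by
      by_contra! hpq
      exact h (by rw [Real.sign_of_neg hp, Real.sign_of_neg hpq])
    rw [Real.sign_of_neg hp, Real.sign_of_pos (by linarith), abs_of_neg hp,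
      abs_of_pos (by linarith)]
    exact ⟨by norm_num, by linarith⟩
  · have hq : q ≠ 0 := by rintro rfl; simp at h
    simpa [Real.sign_eq_zero_iff] using hq
  · have hpq : p + q ≤ 0 := by
      by_contra! hpq
      exact h (by rw [Real.sign_of_pos hp, Real.sign_of_pos hpq])
    rw [Real.sign_of_pos hp, Real.sign_of_neg (by linarith), abs_of_pos hp,
      abs_of_neg (by linarith)]
    exact ⟨by norm_num, by linarith⟩

section KerLe

variable {K W : Type*} [CommRing K] [AddCommGroup W] [Module K W] {M : Submodule K W}
  {f g : W →ₗ[K] K}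

theorem mul_eq_mul_of_ker_le (hker : ∀ w ∈ M, g w = 0 → f w = 0) {x y : W} (hx : x ∈ M)
    (hy : y ∈ M) : g y * f x = g x * f y := by
  have h := hker (g y • x - g x • y) (sub_mem (M.smul_mem _ hx) (M.smul_mem _ hy))
    (by simp [mul_comm])
  simpa [sub_eq_zero] using h

theorem abs_le_abs_of_ker_le [LinearOrder K] [IsStrictOrderedRing K]
    (hker : ∀ w ∈ M, g w = 0 → f w = 0) {x y : W} (hx : x ∈ M) (hy : y ∈ M)
    (hxy : |f x| ≤ |f y|) (hy₀ : f y ≠ 0) : |g x| ≤ |g y| := by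
  have h := congrArg abs (mul_eq_mul_of_ker_le hker hx hy)
  rw [abs_mul, abs_mul] at h
  exact le_of_mul_le_mul_right (h ▸ mul_le_mul_of_nonneg_left hxy (abs_nonneg _)) (abs_pos.2 hy₀)

end KerLe

section Margins

variable {V : Type*} [NormedAddCommGroup V]

def crossClassDists (S : Set V) (F : V → ℝ) : Set ℝ :=
  {s | ∃ x₁ ∈ S, ∃ x₂ ∈ S, F x₁ ≠ F x₂ ∧ s = ‖x₁ - x₂‖}

def flipPerturbationNorms (S : Set V) (G : V → ℝ) : Set ℝ :=
  {s | ∃ x ∈ S, ∃ dlt : V, G x ≠ G (x + dlt) ∧ s = ‖dlt‖}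

theorem nonneg_of_mem_crossClassDists {S : Set V} {F : V → ℝ} :
    ∀ a ∈ crossClassDists S F, 0 ≤ a := by
  rintro a ⟨x₁, -, x₂, -, -, rfl⟩
  exact norm_nonneg _

theorem nonneg_of_mem_flipPerturbationNorms {S : Set V} {G : V → ℝ} :
    ∀ b ∈ flipPerturbationNorms S G, 0 ≤ b := by
  rintro b ⟨x, -, dlt, -, rfl⟩
  exact norm_nonneg _

variable [InnerProductSpace ℝ V] {M : Submodule ℝ V} [M.HasOrthogonalProjection] {S : Set V}
  {F : V → ℝ}

theorem half_mem_flipPerturbationNorms (hS : S ⊆ M) {a : ℝ} (ha : a ∈ crossClassDists S F) :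
    a / 2 ∈ flipPerturbationNorms S (F ∘ M.starProjection) := by
  obtain ⟨x₁, hx₁, x₂, hx₂, hne, rfl⟩ := ha
  have hm : midpoint ℝ x₁ x₂ ∈ M := by
    rw [midpoint_eq_smul_add]
    exact M.smul_mem _ (add_mem (hS hx₁) (hS hx₂))
  have hflip : ∀ x ∈ S, F x ≠ F (midpoint ℝ x₁ x₂) →
      (F ∘ M.starProjection) x ≠ (F ∘ M.starProjection) (x + (midpoint ℝ x₁ x₂ - x)) :=
    fun x hx => by
      simp [Submodule.starProjection_eq_self_iff.2 (hS hx),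
        Submodule.starProjection_eq_self_iff.2 hm]
  by_cases h₁ : F x₁ = F (midpoint ℝ x₁ x₂)
  · refine ⟨x₂, hx₂, _, hflip x₂ hx₂ (h₁ ▸ hne.symm), ?_⟩
    rw [← dist_eq_norm, ← dist_eq_norm, dist_midpoint_right (𝕜 := ℝ)]
    simp [div_eq_inv_mul]
  · refine ⟨x₁, hx₁, _, hflip x₁ hx₁ h₁, ?_⟩
    rw [← dist_eq_norm, ← dist_eq_norm, dist_midpoint_left (𝕜 := ℝ)]
    simp [div_eq_inv_mul]

theorem exists_flip_in_submodule (hS : S ⊆ M) {b : ℝ}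
    (hb : b ∈ flipPerturbationNorms S (F ∘ M.starProjection)) :
    ∃ x ∈ S, ∃ v ∈ M, F x ≠ F (x + v) ∧ ‖v‖ ≤ b := by
  obtain ⟨x, hx, dlt, hne, rfl⟩ := hb
  refine ⟨x, hx, M.starProjection dlt, M.starProjection_apply_mem dlt, ?_,
    M.norm_starProjection_apply_le dlt⟩
  simpa [Submodule.starProjection_eq_self_iff.2 (hS hx)] using hne

end Margins

section LinearClassifier

variable {V : Type*} [NormedAddCommGroup V] [InnerProductSpace ℝ V]

noncomputable def linearClassifier (n : V) : V → ℝ := fun x => Real.sign ⟪n, x⟫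

def outsideSlab (M : Submodule ℝ V) (c : V) (δ : ℝ) : Set V := {x | x ∈ M ∧ δ ≤ |⟪c, x⟫|}

theorem Ioi_subset_crossClassDists {S : Set V} {n x₀ w : V} (hline : ∀ t : ℝ, x₀ + t • w ∈ S)
    (hw : ⟪n, w⟫ ≠ 0) : Set.Ioi 0 ⊆ crossClassDists S (linearClassifier n) := by
  intro ε (hε : 0 < ε)
  have hw₀ : w ≠ 0 := by rintro rfl; simp at hw
  set t₀ := -⟪n, x₀⟫ / ⟪n, w⟫
  set s := ε / ‖w‖
  have hs : s ≠ 0 := (div_pos hε (norm_pos_iff.2 hw₀)).ne'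
  refine ⟨x₀ + (t₀ + s) • w, hline _, x₀ + t₀ • w, hline _, ?_, ?_⟩
  · have h₁ : ⟪n, x₀ + (t₀ + s) • w⟫ = s * ⟪n, w⟫ := by
      simp only [inner_add_right, inner_smul_right, t₀]
      field_simp
      ring
    have h₂ : ⟪n, x₀ + t₀ • w⟫ = 0 := by
      simp only [inner_add_right, inner_smul_right, t₀]
      field_simp
      ring
    simp [linearClassifier, h₁, h₂, Real.sign_eq_zero_iff, hs, hw]
  · rw [add_sub_add_left_eq_sub, ← sub_smul, add_sub_cancel_left, norm_smul, Real.norm_eq_abs,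
      abs_of_pos (div_pos hε (norm_pos_iff.2 hw₀)), div_mul_cancel₀ _ (norm_ne_zero_iff.2 hw₀)]

theorem two_mul_norm_mem_crossClassDists {M : Submodule ℝ V} {n c x v : V} {δ : ℝ}
    (hker : ∀ w ∈ M, ⟪c, w⟫ = 0 → ⟪n, w⟫ = 0) (hx : x ∈ outsideSlab M c δ) (hv : v ∈ M)
    (hflip : linearClassifier n x ≠ linearClassifier n (x + v)) :
    2 * ‖v‖ ∈ crossClassDists (outsideSlab M c δ) (linearClassifier n) := by
  have hy : x + (2 : ℝ) • v ∈ M := add_mem hx.1 (M.smul_mem _ hv)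
  have hny : ⟪n, x + (2 : ℝ) • v⟫ = ⟪n, x⟫ + 2 * ⟪n, v⟫ := by
    rw [inner_add_right, inner_smul_right]
  obtain ⟨hsign, habs⟩ := Real.sign_add_two_mul_ne_and_abs_le (p := ⟪n, x⟫) (q := ⟪n, v⟫)
    (by simpa [linearClassifier, inner_add_right] using hflip)
  rw [← hny] at hsign habs
  have hy₀ : ⟪n, x + (2 : ℝ) • v⟫ ≠ 0 := by
    intro h
    rw [h, abs_zero, abs_nonpos_iff] at habs
    exact hsign (by rw [h, habs])
  have hcy : |⟪c, x⟫| ≤ |⟪c, x + (2 : ℝ) • v⟫| :=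
    abs_le_abs_of_ker_le (f := innerₗ V n) (g := innerₗ V c) hker hx.1 hy habs hy₀
  refine ⟨x + (2 : ℝ) • v, ⟨hy, hx.2.trans hcy⟩, x, hx, hsign, ?_⟩
  simp [norm_smul]

variable {M : Submodule ℝ V} [M.HasOrthogonalProjection] {n c : V} {δ : ℝ}

theorem exists_mem_crossClassDists_half_le {b : ℝ}
    (hb : b ∈ flipPerturbationNorms (outsideSlab M c δ) (linearClassifier n ∘ M.starProjection))
    {ε : ℝ} (hε : 0 < ε) :
    ∃ a ∈ crossClassDists (outsideSlab M c δ) (linearClassifier n), 1 / 2 * a ≤ b + ε := by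
  obtain ⟨x, hx, v, hv, hflip, hvb⟩ := exists_flip_in_submodule (fun _ hy => hy.1) hb
  by_cases hker : ∀ w ∈ M, ⟪c, w⟫ = 0 → ⟪n, w⟫ = 0
  · exact ⟨_, two_mul_norm_mem_crossClassDists hker hx hv hflip, by linarith⟩
  push Not at hker
  obtain ⟨w, hw, hcw, hnw⟩ := hker
  have hline : ∀ t : ℝ, x + t • w ∈ outsideSlab M c δ := fun t =>
    ⟨add_mem hx.1 (M.smul_mem t hw), by simpa [inner_add_right, inner_smul_right, hcw] using hx.2⟩
  exact ⟨ε, Ioi_subset_crossClassDists hline hnw hε, by linarith [norm_nonneg v]⟩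

theorem half_sInf_crossClassDists_eq_sInf_flipPerturbationNorms :
    1 / 2 * sInf (crossClassDists (outsideSlab M c δ) (linearClassifier n)) =
      sInf (flipPerturbationNorms (outsideSlab M c δ) (linearClassifier n ∘ M.starProjection)) :=
  mul_sInf_eq_sInf_of_approx one_half_pos nonneg_of_mem_crossClassDists
    nonneg_of_mem_flipPerturbationNorms
    (fun a ha => ⟨a / 2, half_mem_flipPerturbationNorms (fun _ hy => hy.1) ha, by linarith⟩)
    (fun _ hb _ hε => exists_mem_crossClassDists_half_le hb hε)

end LinearClassifier

/-- Let `M* = {x : Ax = 0, |cᵀx| ≥ δ}` be contained in the linear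
subspace `M = {x : Ax = 0}`, `E` the orthogonal projection onto `M`, and
`F(x) = sign(n̂ᵀx)` a linear classifier.  Then the manifold margin equals the
Euclidean margin of the composed classifier: `d_M(F) = d_e(F ∘ E)`. -/
theorem stmt_11 (d m : ℕ) (A : Matrix (Fin m) (Fin d) ℝ)
    (cvec : EuclideanSpace ℝ (Fin d)) (δ : ℝ)
    (M : Submodule ℝ (EuclideanSpace ℝ (Fin d)))
    (hM : M = LinearMap.ker (Matrix.toEuclideanLin A))
    (Mstar : Set (EuclideanSpace ℝ (Fin d)))
    (hMstar : Mstar = {x : EuclideanSpace ℝ (Fin d) | A.mulVec (WithLp.ofLp x) = 0 ∧ δ ≤ |inner ℝ cvec x|})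
    (nhat : EuclideanSpace ℝ (Fin d))
    (F : EuclideanSpace ℝ (Fin d) → ℝ)
    (hF : ∀ x, F x = Real.sign (inner ℝ nhat x))
    (E : EuclideanSpace ℝ (Fin d) → EuclideanSpace ℝ (Fin d))
    (hE : ∀ x, E x = (Submodule.orthogonalProjectionOnto M x : EuclideanSpace ℝ (Fin d))) :
    (1 / 2) * sInf {s : ℝ | ∃ x₁ ∈ Mstar, ∃ x₂ ∈ Mstar, F x₁ ≠ F x₂ ∧ s = ‖x₁ - x₂‖}
      = sInf {s : ℝ | ∃ x ∈ Mstar, ∃ dlt : EuclideanSpace ℝ (Fin d),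
          F (E x) ≠ F (E (x + dlt)) ∧ s = ‖dlt‖} := by
  have hS : Mstar = outsideSlab M cvec δ := by
    ext x
    simp [hMstar, outsideSlab, hM, Matrix.toLpLin_apply]
  obtain rfl : F = linearClassifier nhat := funext hF
  obtain rfl : E = M.starProjection := funext fun x => by
    rw [hE, Submodule.coe_orthogonalProjectionOnto_apply]
  subst hS
  exact half_sInf_crossClassDists_eq_sInf_flipPerturbationNorms
end

section
/- Let M ⊆ ℝ^d be an r-dimensional linear subspace and let F be a linear classifier with a random decision boundary, i.e., with unit normal direction determined by n̂ ∼ N(0, (1/d)I). Then the expected ratio of Euclidean margin to manifold margin satisfies E[d_e(F)/d_M(F)] ≤ √(r/d). -/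
/-!
A point `x` lies at distance `|⟪n, x⟫| / ‖n‖` from the decision boundary `⟪n, ·⟫ = 0`, which
bounds the Euclidean margin. Two points `xⱼ = V cⱼ` of `D` classified differently lie on opposite
sides, so `|⟪n, x₁⟫| + |⟪n, x₂⟫| = |⟪Vᵀn, c₁ - c₂⟫| ≤ ‖Vᵀn‖ ‖x₁ - x₂‖`, as `V` is an isometry.
Hence `d_e / d_M ≤ ‖Vᵀn‖ / ‖n‖` pointwise. For i.i.d. symmetric atomless coordinates, sign flips
and coordinate permutations give `E[nᵢ nₖ / ‖n‖²] = δᵢₖ / d`, so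
`E[‖Vᵀn‖² / ‖n‖²] = tr (V Vᵀ) / d = r / d`, and Jensen's inequality `(E X)² ≤ E X²` concludes.
-/

open Matrix MeasureTheory ProbabilityTheory
open scoped RealInnerProductSpace Pointwise

theorem sq_integral_le_integral_sq {Ω : Type*} [MeasurableSpace Ω] {μ : Measure Ω}
    [IsProbabilityMeasure μ] {X : Ω → ℝ} (hX : MemLp X 2 μ) :
    (∫ ω, X ω ∂μ) ^ 2 ≤ ∫ ω, X ω ^ 2 ∂μ := by
  have h := variance_nonneg X μ
  rw [variance_eq_sub hX] at h
  simpa using h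

theorem EuclideanSpace.inner_toLp_eq_sum {ι : Type*} [Fintype ι] (n : ι → ℝ)
    (x : EuclideanSpace ℝ ι) : ⟪WithLp.toLp 2 n, x⟫ = ∑ i, n i * x i := by
  simp [PiLp.inner_apply, mul_comm]

theorem EuclideanSpace.norm_toLp_sq {ι : Type*} [Fintype ι] (x : ι → ℝ) :
    ‖WithLp.toLp 2 x‖ ^ 2 = x ⬝ᵥ x := by
  rw [← real_inner_self_eq_norm_sq, EuclideanSpace.inner_eq_star_dotProduct]
  simp

section Margin

variable {E : Type*} [NormedAddCommGroup E] [InnerProductSpace ℝ E]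

/- The margins `d_e(F)` and `d_M(F)` of the linear classifier `F x = sign ⟪n, x⟫` on the data
set `D`. -/
noncomputable def euclideanMargin (n : E) (D : Set E) : ℝ :=
  sInf {s | ∃ x ∈ D, ∃ δ : E, Real.sign ⟪n, x⟫ ≠ Real.sign ⟪n, x + δ⟫ ∧ s = ‖δ‖}

noncomputable def manifoldMargin (n : E) (D : Set E) : ℝ :=
  1 / 2 * sInf {s | ∃ x₁ ∈ D, ∃ x₂ ∈ D, Real.sign ⟪n, x₁⟫ ≠ Real.sign ⟪n, x₂⟫ ∧ s = ‖x₁ - x₂‖}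

variable {n : E} {D : Set E}

theorem euclideanMargin_nonneg : 0 ≤ euclideanMargin n D :=
  Real.sInf_nonneg <| by rintro _ ⟨x, -, δ, -, rfl⟩; exact norm_nonneg δ

theorem manifoldMargin_nonneg : 0 ≤ manifoldMargin n D :=
  mul_nonneg (by norm_num) <| Real.sInf_nonneg <| by
    rintro _ ⟨x₁, -, x₂, -, -, rfl⟩; exact norm_nonneg _

theorem euclideanMargin_le_norm {x δ : E} (hx : x ∈ D)
    (h : Real.sign ⟪n, x⟫ ≠ Real.sign ⟪n, x + δ⟫) : euclideanMargin n D ≤ ‖δ‖ :=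
  csInf_le ⟨0, by rintro _ ⟨x, -, δ, -, rfl⟩; exact norm_nonneg δ⟩ ⟨x, hx, δ, h, rfl⟩

theorem euclideanMargin_le_abs_inner_div_norm (hn : n ≠ 0) {x : E} (hx : x ∈ D) :
    euclideanMargin n D ≤ |⟪n, x⟫| / ‖n‖ := by
  have hn' : 0 < ‖n‖ := norm_pos_iff.mpr hn
  by_cases hnx : ⟪n, x⟫ = 0
  · -- pushing `x` off the hyperplane along `n` costs arbitrarily little
    rw [hnx, abs_zero, zero_div]
    refine le_of_forall_pos_le_add fun ε hε => ?_
    have hδ : ⟪n, x + (ε / ‖n‖) • n⟫ = ε * ‖n‖ := by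
      rw [inner_add_right, hnx, real_inner_smul_right, real_inner_self_eq_norm_sq]
      field_simp
      ring
    calc euclideanMargin n D ≤ ‖(ε / ‖n‖) • n‖ := by
          refine euclideanMargin_le_norm hx ?_
          rw [hnx, hδ, Real.sign_zero, Real.sign_of_pos (by positivity)]
          norm_num
      _ = 0 + ε := by
          rw [norm_smul, Real.norm_of_nonneg (by positivity), div_mul_cancel₀ _ hn'.ne']
          ring
  · -- move `x` to its orthogonal projection onto the hyperplane
    have hδ : ⟪n, x + (-(⟪n, x⟫ / ‖n‖ ^ 2)) • n⟫ = 0 := by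
      rw [inner_add_right, real_inner_smul_right, real_inner_self_eq_norm_sq]
      field_simp
      ring
    calc euclideanMargin n D ≤ ‖(-(⟪n, x⟫ / ‖n‖ ^ 2)) • n‖ := by
          refine euclideanMargin_le_norm hx ?_
          rw [hδ, Real.sign_zero]
          exact fun h => hnx (Real.sign_eq_zero_iff.mp h)
      _ = |⟪n, x⟫| / ‖n‖ := by
          rw [norm_smul, norm_neg, Real.norm_eq_abs, abs_div, abs_of_nonneg (sq_nonneg ‖n‖)]
          field_simp

theorem abs_sub_eq_abs_add_abs_of_sign_ne {a b : ℝ} (h : Real.sign a ≠ Real.sign b) :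
    |a - b| = |a| + |b| := by
  rcases lt_trichotomy a 0 with ha | rfl | ha <;> rcases lt_trichotomy b 0 with hb | rfl | hb <;>
    simp_all [Real.sign_of_neg, Real.sign_of_pos, abs_of_neg, abs_of_pos] <;> grind

theorem euclideanMargin_le_mul_norm_sub {K : ℝ}
    (hK : ∀ x₁ ∈ D, ∀ x₂ ∈ D, |⟪n, x₁ - x₂⟫| ≤ K * ‖x₁ - x₂‖) {x₁ x₂ : E} (hx₁ : x₁ ∈ D)
    (hx₂ : x₂ ∈ D) (hsign : Real.sign ⟪n, x₁⟫ ≠ Real.sign ⟪n, x₂⟫) :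
    euclideanMargin n D ≤ K / ‖n‖ / 2 * ‖x₁ - x₂‖ := by
  have hn : n ≠ 0 := by rintro rfl; simp at hsign
  have h₁ := euclideanMargin_le_abs_inner_div_norm hn hx₁
  have h₂ := euclideanMargin_le_abs_inner_div_norm hn hx₂
  have hsum : |⟪n, x₁⟫| + |⟪n, x₂⟫| = |⟪n, x₁ - x₂⟫| := by
    rw [inner_sub_right, abs_sub_eq_abs_add_abs_of_sign_ne hsign]
  calc euclideanMargin n D ≤ (|⟪n, x₁⟫| + |⟪n, x₂⟫|) / ‖n‖ / 2 := by
        rw [add_div]; linarith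
    _ ≤ K / ‖n‖ / 2 * ‖x₁ - x₂‖ := by
        rw [hsum, div_div, div_div, div_mul_eq_mul_div]
        gcongr
        exact hK x₁ hx₁ x₂ hx₂

theorem euclideanMargin_div_manifoldMargin_le {K : ℝ} (hK₀ : 0 ≤ K)
    (hK : ∀ x₁ ∈ D, ∀ x₂ ∈ D, |⟪n, x₁ - x₂⟫| ≤ K * ‖x₁ - x₂‖) :
    euclideanMargin n D / manifoldMargin n D ≤ K / ‖n‖ := by
  set S : Set ℝ :=
    {s | ∃ x₁ ∈ D, ∃ x₂ ∈ D, Real.sign ⟪n, x₁⟫ ≠ Real.sign ⟪n, x₂⟫ ∧ s = ‖x₁ - x₂‖}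
  have hdM : manifoldMargin n D = 1 / 2 * sInf S := rfl
  rcases S.eq_empty_or_nonempty with hS | hS
  · rw [hdM, hS, Real.sInf_empty, mul_zero, div_zero]
    positivity
  rcases (manifoldMargin_nonneg (n := n) (D := D)).eq_or_lt with h0 | hpos
  · rw [← h0, div_zero]
    positivity
  rw [div_le_iff₀ hpos]
  have hc : 0 ≤ K / ‖n‖ / 2 := by positivity
  calc euclideanMargin n D ≤ sInf ((K / ‖n‖ / 2) • S) := by
        refine le_csInf hS.smul_set ?_
        rintro _ ⟨_, ⟨x₁, hx₁, x₂, hx₂, hsign, rfl⟩, rfl⟩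
        exact euclideanMargin_le_mul_norm_sub hK hx₁ hx₂ hsign
    _ = K / ‖n‖ * manifoldMargin n D := by
        rw [Real.sInf_smul_of_nonneg hc, hdM, smul_eq_mul]
        ring

end Margin

section OrthonormalColumns

variable {ι κ : Type*} [Fintype ι] [Fintype κ] [DecidableEq ι] [DecidableEq κ]
  {V : Matrix ι κ ℝ}

theorem Matrix.inner_toEuclideanLin_transpose (V : Matrix ι κ ℝ) (x : EuclideanSpace ℝ ι)
    (y : EuclideanSpace ℝ κ) : ⟪toEuclideanLin Vᵀ x, y⟫ = ⟪x, toEuclideanLin V y⟫ := by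
  rw [← conjTranspose_eq_transpose_of_trivial, toEuclideanLin_conjTranspose_eq_adjoint,
    LinearMap.adjoint_inner_left]

theorem Matrix.norm_toEuclideanLin_of_transpose_mul_eq_one (hV : Vᵀ * V = 1)
    (y : EuclideanSpace ℝ κ) : ‖toEuclideanLin V y‖ = ‖y‖ := by
  have hVV : toEuclideanLin Vᵀ (toEuclideanLin V y) = y := by
    simp [toLpLin_apply, mulVec_mulVec, hV]
  rw [norm_eq_sqrt_real_inner, norm_eq_sqrt_real_inner, ← inner_toEuclideanLin_transpose, hVV]

theorem Matrix.abs_inner_le_norm_toEuclideanLin_transpose_mul_norm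
    (hV : Vᵀ * V = 1) (x : EuclideanSpace ℝ ι) {y : EuclideanSpace ℝ ι}
    (hy : y ∈ LinearMap.range (toEuclideanLin V)) :
    |⟪x, y⟫| ≤ ‖toEuclideanLin Vᵀ x‖ * ‖y‖ := by
  obtain ⟨c, rfl⟩ := hy
  rw [← inner_toEuclideanLin_transpose, norm_toEuclideanLin_of_transpose_mul_eq_one hV]
  exact abs_real_inner_le_norm _ _

theorem Matrix.norm_toEuclideanLin_transpose_le (hV : Vᵀ * V = 1)
    (x : EuclideanSpace ℝ ι) : ‖toEuclideanLin Vᵀ x‖ ≤ ‖x‖ := by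
  have h : ‖toEuclideanLin Vᵀ x‖ * ‖toEuclideanLin Vᵀ x‖ ≤ ‖x‖ * ‖toEuclideanLin Vᵀ x‖ := by
    rw [← real_inner_self_eq_norm_mul_norm, inner_toEuclideanLin_transpose,
      ← norm_toEuclideanLin_of_transpose_mul_eq_one hV (toEuclideanLin Vᵀ x)]
    exact real_inner_le_norm _ _
  rcases (norm_nonneg (toEuclideanLin Vᵀ x)).eq_or_lt with h0 | hpos
  · rw [← h0]; exact norm_nonneg x
  · exact le_of_mul_le_mul_right h hpos

theorem Matrix.norm_toEuclideanLin_transpose_toLp_sq (x : ι → ℝ) :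
    ‖toEuclideanLin Vᵀ (WithLp.toLp 2 x)‖ ^ 2 = x ⬝ᵥ (V * Vᵀ) *ᵥ x := by
  rw [← real_inner_self_eq_norm_sq, inner_toEuclideanLin_transpose,
    EuclideanSpace.inner_eq_star_dotProduct]
  simp [toLpLin_apply, mulVec_mulVec, dotProduct_comm]

theorem euclideanMargin_div_manifoldMargin_le_of_subset_range (hV : Vᵀ * V = 1)
    {D : Set (EuclideanSpace ℝ ι)} (hD : D ⊆ LinearMap.range (toEuclideanLin V))
    (n : EuclideanSpace ℝ ι) :
    euclideanMargin n D / manifoldMargin n D ≤ ‖toEuclideanLin Vᵀ n‖ / ‖n‖ :=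
  euclideanMargin_div_manifoldMargin_le (norm_nonneg _) fun _ hx₁ _ hx₂ =>
    abs_inner_le_norm_toEuclideanLin_transpose_mul_norm hV n (sub_mem (hD hx₁) (hD hx₂))

theorem memLp_norm_toEuclideanLin_transpose_div_norm (hV : Vᵀ * V = 1) (μ : Measure (ι → ℝ))
    [IsFiniteMeasure μ] :
    MemLp (fun n => ‖toEuclideanLin Vᵀ (WithLp.toLp 2 n)‖ / ‖WithLp.toLp 2 n‖) 2 μ := by
  have hcont : Continuous (toEuclideanLin Vᵀ) := LinearMap.continuous_of_finiteDimensional _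
  refine MemLp.of_bound (Measurable.div (by fun_prop) (by fun_prop)).aestronglyMeasurable 1
    (.of_forall fun n => ?_)
  rw [Real.norm_of_nonneg (by positivity)]
  exact div_le_one_of_le₀ (norm_toEuclideanLin_transpose_le hV _) (norm_nonneg _)

end OrthonormalColumns

section SymmetricProduct

variable {ι : Type*} [Fintype ι] {ν : Measure ℝ} [IsProbabilityMeasure ν]

theorem measurable_mul_div_dotProduct_self (i k : ι) :
    Measurable fun n : ι → ℝ => n i * n k / (n ⬝ᵥ n) := by
  unfold dotProduct; fun_prop

theorem abs_mul_div_dotProduct_self_le_one (n : ι → ℝ) (i k : ι) :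
    |n i * n k / (n ⬝ᵥ n)| ≤ 1 := by
  refine abs_div (n i * n k) _ ▸ div_le_one_of_le₀ ?_ (abs_nonneg _)
  rw [← EuclideanSpace.norm_toLp_sq, abs_mul, abs_sq, sq]
  exact mul_le_mul (PiLp.norm_apply_le (WithLp.toLp 2 n) i)
    (PiLp.norm_apply_le (WithLp.toLp 2 n) k) (abs_nonneg _) (norm_nonneg _)

theorem integrable_mul_div_dotProduct_self (i k : ι) :
    Integrable (fun n : ι → ℝ => n i * n k / (n ⬝ᵥ n)) (Measure.pi fun _ => ν) :=
  (integrable_const (1 : ℝ)).mono' (measurable_mul_div_dotProduct_self i k).aestronglyMeasurable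
    (.of_forall fun n => abs_mul_div_dotProduct_self_le_one n i k)

theorem integral_mul_div_dotProduct_self_of_ne [DecidableEq ι]
    (hν : MeasurePreserving (fun x : ℝ => -x) ν ν) {i k : ι} (hik : i ≠ k) :
    ∫ n : ι → ℝ, n i * n k / (n ⬝ᵥ n) ∂Measure.pi (fun _ => ν) = 0 := by
  set f : ι → ℝ → ℝ := fun a => if a = i then fun x => -x else id
  set flip : (ι → ℝ) → ι → ℝ := fun n a => f a (n a)
  have hflip : MeasurePreserving flip (Measure.pi fun _ => ν) (Measure.pi fun _ => ν) :=
    measurePreserving_pi _ _ fun a => by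
      by_cases h : a = i <;> simp only [f, h, if_true, if_false]
      exacts [hν, .id ν]
  have hodd (n : ι → ℝ) :
      flip n i * flip n k / (flip n ⬝ᵥ flip n) = -(n i * n k / (n ⬝ᵥ n)) := by
    have hdot : flip n ⬝ᵥ flip n = n ⬝ᵥ n :=
      Finset.sum_congr rfl fun a _ => by by_cases h : a = i <;> simp [flip, f, h]
    simp [hdot, flip, f, hik.symm, neg_div]
  have h := integral_map (μ := Measure.pi fun _ => ν) hflip.measurable.aemeasurable
    (measurable_mul_div_dotProduct_self i k).aestronglyMeasurable
  rw [hflip.map_eq] at h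
  simp only [hodd, integral_neg] at h
  linarith

theorem integral_sq_div_dotProduct_self [DecidableEq ι] [NullSingletonClass ν] (i : ι) :
    ∫ n : ι → ℝ, n i * n i / (n ⬝ᵥ n) ∂Measure.pi (fun _ => ν) = (Fintype.card ι : ℝ)⁻¹ := by
  have : Nonempty ι := ⟨i⟩
  have hperm (k : ι) : ∫ n : ι → ℝ, n k * n k / (n ⬝ᵥ n) ∂Measure.pi (fun _ => ν) =
      ∫ n : ι → ℝ, n i * n i / (n ⬝ᵥ n) ∂Measure.pi (fun _ => ν) := by
    have hφ (n : ι → ℝ) (a : ι) :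
        MeasurableEquiv.piCongrLeft (fun _ => ℝ) (Equiv.swap i k) n a =
          n (Equiv.swap i k a) := by
      simpa using MeasurableEquiv.piCongrLeft_apply_apply (β := fun _ => ℝ) (Equiv.swap i k) n
        (Equiv.swap i k a)
    have hdot (n : ι → ℝ) : MeasurableEquiv.piCongrLeft (fun _ => ℝ) (Equiv.swap i k) n ⬝ᵥ
        MeasurableEquiv.piCongrLeft (fun _ => ℝ) (Equiv.swap i k) n = n ⬝ᵥ n := by
      simp only [dotProduct, hφ]
      exact Equiv.sum_comp (Equiv.swap i k) fun a => n a * n a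
    have h := (measurePreserving_piCongrLeft (fun _ => ν) (Equiv.swap i k)).integral_comp'
      fun n : ι → ℝ => n k * n k / (n ⬝ᵥ n)
    simp only [hφ, hdot, Equiv.swap_apply_right] at h
    exact h.symm
  have hsum : ∑ k, ∫ n : ι → ℝ, n k * n k / (n ⬝ᵥ n) ∂Measure.pi (fun _ => ν) = 1 := by
    rw [← integral_finsetSum _ fun k _ => integrable_mul_div_dotProduct_self k k]
    refine (integral_congr_ae ?_).trans
      (by simp : ∫ _ : ι → ℝ, (1 : ℝ) ∂Measure.pi (fun _ => ν) = 1)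
    filter_upwards [Measure.ae_ne _ 0] with n hn
    rw [← Finset.sum_div]
    exact div_self (dotProduct_self_eq_zero.not.mpr hn)
  simp only [hperm, Finset.sum_const, Finset.card_univ, nsmul_eq_mul] at hsum
  exact eq_inv_of_mul_eq_one_right hsum

theorem integral_dotProduct_mulVec_div_dotProduct_self [DecidableEq ι] [NullSingletonClass ν]
    (hν : MeasurePreserving (fun x : ℝ => -x) ν ν) (A : Matrix ι ι ℝ) :
    ∫ n : ι → ℝ, n ⬝ᵥ A *ᵥ n / (n ⬝ᵥ n) ∂Measure.pi (fun _ => ν) =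
      A.trace / Fintype.card ι := by
  have hexpand (n : ι → ℝ) :
      n ⬝ᵥ A *ᵥ n / (n ⬝ᵥ n) = ∑ i, ∑ k, A i k * (n i * n k / (n ⬝ᵥ n)) := by
    simp only [dotProduct, mulVec, Finset.sum_div, Finset.mul_sum]
    exact Finset.sum_congr rfl fun i _ => Finset.sum_congr rfl fun k _ => by ring
  have hint (i k : ι) :=
    (integrable_mul_div_dotProduct_self (ν := ν) i k).const_mul (A i k)
  simp_rw [hexpand]
  rw [integral_finsetSum _ fun i _ => integrable_finsetSum _ fun k _ => hint i k, trace,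
    Finset.sum_div]
  refine Finset.sum_congr rfl fun i _ => ?_
  rw [integral_finsetSum _ fun k _ => hint i k, Finset.sum_eq_single i, integral_const_mul,
    integral_sq_div_dotProduct_self, diag_apply, div_eq_mul_inv]
  · intro k _ hki
    rw [integral_const_mul, integral_mul_div_dotProduct_self_of_ne hν hki.symm, mul_zero]
  · simp

end SymmetricProduct

theorem integral_norm_toEuclideanLin_transpose_div_norm_sq {ι κ : Type*} [Fintype ι] [Fintype κ]
    [DecidableEq ι] [DecidableEq κ] {V : Matrix ι κ ℝ} (hV : Vᵀ * V = 1) {v : NNReal}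
    (hv : v ≠ 0) :
    ∫ n, (‖toEuclideanLin Vᵀ (WithLp.toLp 2 n)‖ / ‖WithLp.toLp 2 n‖) ^ 2
        ∂Measure.pi (fun _ : ι => gaussianReal 0 v) = Fintype.card κ / Fintype.card ι := by
  have := nullSingletonClass_gaussianReal (μ := 0) hv
  have hneg : MeasurePreserving (fun x : ℝ => -x) (gaussianReal 0 v) (gaussianReal 0 v) :=
    ⟨measurable_neg, by simpa using gaussianReal_map_neg (μ := 0) (v := v)⟩
  simp only [div_pow, norm_toEuclideanLin_transpose_toLp_sq, EuclideanSpace.norm_toLp_sq]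
  rw [integral_dotProduct_mulVec_div_dotProduct_self hneg, trace_mul_comm, hV, trace_one]

/-- Let `M ⊆ ℝ^d` be the `r`-dimensional subspace spanned by the
orthonormal columns of `V`, `D ⊆ M` a dataset, and for a random normal direction
`n̂ ∼ N(0, (1/d)I)` let `F_n̂(x) = sign(n̂ᵀx)` be the induced linear classifier with
Euclidean margin `d_e(F)` and manifold margin `d_M(F)`.  Then
`E[d_e(F)/d_M(F)] ≤ √(r/d)`. -/
theorem stmt_13 (d r : ℕ) (hd : 0 < d)
    (V : Matrix (Fin d) (Fin r) ℝ) (hV : Vᵀ * V = 1)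
    (M : Submodule ℝ (EuclideanSpace ℝ (Fin d)))
    (hM : M = LinearMap.range (Matrix.toEuclideanLin V))
    (D : Set (EuclideanSpace ℝ (Fin d))) (hD : D ⊆ ↑M)
    (de dM : (Fin d → ℝ) → ℝ)
    (hde : ∀ n, de n = sInf {s : ℝ | ∃ x ∈ D, ∃ dlt : EuclideanSpace ℝ (Fin d),
        Real.sign (∑ i, n i * x i) ≠ Real.sign (∑ i, n i * (x + dlt) i) ∧ s = ‖dlt‖})
    (hdM : ∀ n, dM n = (1 / 2) * sInf {s : ℝ | ∃ x₁ ∈ D, ∃ x₂ ∈ D,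
        Real.sign (∑ i, n i * x₁ i) ≠ Real.sign (∑ i, n i * x₂ i) ∧ s = ‖x₁ - x₂‖}) :
    ∫ n : Fin d → ℝ, de n / dM n
        ∂(Measure.pi fun _ : Fin d => gaussianReal 0 (d : NNReal)⁻¹)
      ≤ Real.sqrt ((r : ℝ) / d) := by
  subst hM
  have hv : (d : NNReal)⁻¹ ≠ 0 := inv_ne_zero (Nat.cast_ne_zero.mpr hd.ne')
  have hmargins (n : Fin d → ℝ) : de n / dM n =
      euclideanMargin (WithLp.toLp 2 n) D / manifoldMargin (WithLp.toLp 2 n) D := by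
    simp only [hde, hdM, euclideanMargin, manifoldMargin, EuclideanSpace.inner_toLp_eq_sum]
  have hg := memLp_norm_toEuclideanLin_transpose_div_norm hV
    (Measure.pi fun _ : Fin d => gaussianReal 0 (d : NNReal)⁻¹)
  have hg_sq := integral_norm_toEuclideanLin_transpose_div_norm_sq hV hv
  rw [Fintype.card_fin, Fintype.card_fin] at hg_sq
  simp only [hmargins]
  calc _ ≤ ∫ n, ‖toEuclideanLin Vᵀ (WithLp.toLp 2 n)‖ / ‖WithLp.toLp 2 n‖
          ∂Measure.pi (fun _ : Fin d => gaussianReal 0 (d : NNReal)⁻¹) :=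
        integral_mono_of_nonneg
          (.of_forall fun _ => div_nonneg euclideanMargin_nonneg manifoldMargin_nonneg)
          (hg.integrable one_le_two)
          (.of_forall fun _ => euclideanMargin_div_manifoldMargin_le_of_subset_range hV hD _)
    _ ≤ √(r / d) := Real.le_sqrt_of_sq_le (hg_sq ▸ sq_integral_le_integral_sq hg)
end
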